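/- arXiv:2105.14410 — 4 statements merged into one kernel-verified Lean document; each statement's English description precedes it below -/
import Mathlib

section
/- A real square matrix A is real diagonalizable if and only if there exists a symmetric positive definite matrix A₀ such that A₀A is symmetric. -/
/-!
Write a symmetrizer as `A₀ = Bᵀ B` with `B` invertible. Then `B A B⁻¹ = (B⁻¹)ᵀ (A₀ A) B⁻¹`
is symmetric, so the spectral theorem diagonalizes it, and with it `A`. Conversely, if
`A = P⁻¹ D P` then `A₀ = Pᵀ P` is positive definite and `A₀ A = Pᵀ D P` is symmetric.
-/

open Matrix

/-- A real square matrix is real diagonalizable: `A = P⁻¹ D P` with `P` invertible and `D` diagonal. -/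
def RealDiagonalizable {n : ℕ} (A : Matrix (Fin n) (Fin n) ℝ) : Prop :=
  ∃ P D : Matrix (Fin n) (Fin n) ℝ, IsUnit P.det ∧ D.IsDiag ∧ A = P⁻¹ * D * P

namespace Matrix

variable {ι : Type*} [Fintype ι] [DecidableEq ι]

open scoped ComplexOrder MatrixOrder in
theorem PosDef.exists_isUnit_eq_conjTranspose_mul_self {𝕜 : Type*} [RCLike 𝕜]
    {A : Matrix ι ι 𝕜} (hA : A.PosDef) : ∃ B : Matrix ι ι 𝕜, IsUnit B ∧ A = Bᴴ * B :=
  CStarAlgebra.isStrictlyPositive_iff_eq_star_mul_self.mp hA.isStrictlyPositive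

theorem IsHermitian.mul_mul_inv_of_conjTranspose_mul_self_mul {R : Type*} [CommRing R]
    [StarRing R] {A B : Matrix ι ι R} (h : (Bᴴ * B * A).IsHermitian) (hB : IsUnit B) :
    (B * A * B⁻¹).IsHermitian := by
  have hBB : (B⁻¹)ᴴ * Bᴴ = 1 := by
    rw [← conjTranspose_mul, mul_nonsing_inv B ((isUnit_iff_isUnit_det B).mp hB),
      conjTranspose_one]
  have hconj : B * A * B⁻¹ = (B⁻¹)ᴴ * (Bᴴ * B * A) * B⁻¹ := by
    simp only [← mul_assoc, hBB, one_mul]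
  rw [hconj]
  exact isHermitian_conjTranspose_mul_mul _ h

end Matrix

section RealDiagonalizable

variable {n : ℕ}

theorem RealDiagonalizable.inv_mul_mul {M : Matrix (Fin n) (Fin n) ℝ} (hM : RealDiagonalizable M)
    {Q : Matrix (Fin n) (Fin n) ℝ} (hQ : IsUnit Q.det) : RealDiagonalizable (Q⁻¹ * M * Q) := by
  obtain ⟨P, D, hP, hD, rfl⟩ := hM
  refine ⟨P * Q, D, by rw [det_mul]; exact hP.mul hQ, hD, ?_⟩
  rw [Matrix.mul_inv_rev]
  simp only [mul_assoc]

theorem Matrix.IsHermitian.realDiagonalizable {M : Matrix (Fin n) (Fin n) ℝ}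
    (hM : M.IsHermitian) : RealDiagonalizable M := by
  set U : Matrix (Fin n) (Fin n) ℝ := (hM.eigenvectorUnitary : Matrix (Fin n) (Fin n) ℝ)
  have hU : star U * U = 1 := Unitary.star_mul_self_of_mem hM.eigenvectorUnitary.2
  refine ⟨star U, diagonal (RCLike.ofReal ∘ hM.eigenvalues), ?_, isDiag_diagonal _, ?_⟩
  · exact isUnit_det_of_right_inverse hU
  · rw [inv_eq_right_inv hU]
    exact hM.spectral_theorem

theorem RealDiagonalizable.exists_posDef_isSymm_mul {A : Matrix (Fin n) (Fin n) ℝ}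
    (hA : RealDiagonalizable A) :
    ∃ A₀ : Matrix (Fin n) (Fin n) ℝ, A₀.PosDef ∧ (A₀ * A).IsSymm := by
  obtain ⟨P, D, hP, hD, rfl⟩ := hA
  have hPinj : Function.Injective P.mulVec :=
    mulVec_injective_iff_isUnit.mpr ((isUnit_iff_isUnit_det P).mpr hP)
  refine ⟨Pᴴ * P, PosDef.conjTranspose_mul_self P hPinj, ?_⟩
  have hA₀A : Pᴴ * P * (P⁻¹ * D * P) = Pᴴ * D * P := by
    simp only [← mul_assoc, mul_nonsing_inv_cancel_right _ _ hP]
  rw [hA₀A, ← isHermitian_iff_isSymm]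
  exact isHermitian_conjTranspose_mul_mul P (isHermitian_iff_isSymm.mpr hD.isSymm)

end RealDiagonalizable

/-- A real square matrix `A` is real diagonalizable iff there exists a symmetric positive
definite matrix `A₀` (a symmetrizer) such that `A₀ * A` is symmetric. -/
theorem realDiagonalizable_iff_exists_symmetrizer {n : ℕ} (A : Matrix (Fin n) (Fin n) ℝ) :
    RealDiagonalizable A ↔
      ∃ A₀ : Matrix (Fin n) (Fin n) ℝ, A₀.PosDef ∧ (A₀ * A).IsSymm := by
  refine ⟨RealDiagonalizable.exists_posDef_isSymm_mul, ?_⟩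
  rintro ⟨A₀, hA₀, hA₀A⟩
  obtain ⟨B, hB, rfl⟩ := hA₀.exists_isUnit_eq_conjTranspose_mul_self
  have hBAB := (isHermitian_iff_isSymm.mpr hA₀A).mul_mul_inv_of_conjTranspose_mul_self_mul hB
  have hBdet : IsUnit B.det := (isUnit_iff_isUnit_det B).mp hB
  have h := hBAB.realDiagonalizable.inv_mul_mul hBdet
  rwa [mul_assoc, mul_assoc, nonsing_inv_mul _ hBdet, mul_one,
    nonsing_inv_mul_cancel_left _ _ hBdet] at h
end

section
/- Any real tridiagonal matrix whose corresponding off-diagonal entries have positive products (in particular, all off-diagonal entries positive) is real diagonalizable: there exists a positive diagonal matrix A₀ such that A₀A is symmetric. -/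
open Matrix

/-!
If `d` is positive and `diagonal d * A` is symmetric, then conjugating `A` by
`diagonal (√d)` gives the symmetric matrix with entries `√(d i) A i j / √(d j)`, which is
orthogonally diagonalizable by the spectral theorem. For a tridiagonal `A` only adjacent
entries constrain `d`, and `d (k + 1) = d k * A k (k + 1) / A (k + 1) k` solves those
constraints; positivity of `A k (k + 1) * A (k + 1) k` keeps every `d k` positive.
-/

namespace Matrix

variable {ι α : Type*} [Fintype ι] [DecidableEq ι]

theorem isSymm_diagonal_mul_iff [NonUnitalNonAssocSemiring α] {d : ι → α}
    {A : Matrix ι ι α} :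
    (diagonal d * A).IsSymm ↔ ∀ i j, d i * A i j = d j * A j i := by
  simp only [IsSymm.ext_iff, diagonal_mul]
  exact forall_comm

theorem isSymm_diagonal_mul_of_tridiagonal [NonUnitalNonAssocSemiring α] {n : ℕ}
    {d : Fin n → α} {A : Matrix (Fin n) (Fin n) α}
    (htri : ∀ i j : Fin n, ((i : ℕ) + 1 < (j : ℕ) ∨ (j : ℕ) + 1 < (i : ℕ)) → A i j = 0)
    (hadj : ∀ i j : Fin n, (j : ℕ) = (i : ℕ) + 1 → d i * A i j = d j * A j i) :
    (diagonal d * A).IsSymm := by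
  refine isSymm_diagonal_mul_iff.2 fun i j => ?_
  rcases lt_trichotomy (i : ℕ) j with hij | hij | hij
  · rcases (Nat.succ_le_of_lt hij).eq_or_lt with hsucc | hfar
    · exact hadj i j hsucc.symm
    · rw [htri i j (.inl hfar), htri j i (.inr hfar), mul_zero, mul_zero]
  · rw [Fin.ext hij]
  · rcases (Nat.succ_le_of_lt hij).eq_or_lt with hsucc | hfar
    · exact (hadj j i hsucc.symm).symm
    · rw [htri i j (.inr hfar), htri j i (.inl hfar), mul_zero, mul_zero]

theorem isSymm_diagonal_mul_conj_inv [Field α] {e : ι → α}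
    (he : ∀ i, e i ≠ 0) {A : Matrix ι ι α} (hA : (diagonal (e * e) * A).IsSymm) :
    (diagonal e * A * diagonal e⁻¹).IsSymm := by
  rw [isSymm_diagonal_mul_iff] at hA
  refine IsSymm.ext fun i j => ?_
  have hij := hA i j
  simp only [mul_diagonal, diagonal_mul, Pi.inv_apply, Pi.mul_apply] at hij ⊢
  field_simp [he i, he j]
  linear_combination -hij

end Matrix

theorem exists_pos_adjacent_symmetrizer {n : ℕ} (A : Matrix (Fin n) (Fin n) ℝ)
    (hpos : ∀ i j : Fin n, (j : ℕ) = (i : ℕ) + 1 → 0 < A i j * A j i) :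
    ∃ d : Fin n → ℝ, (∀ i, 0 < d i) ∧
      ∀ i j : Fin n, (j : ℕ) = (i : ℕ) + 1 → d i * A i j = d j * A j i := by
  let r : ℕ → ℝ := fun k =>
    if h : k + 1 < n then
      A ⟨k, k.lt_succ_self.trans h⟩ ⟨k + 1, h⟩ / A ⟨k + 1, h⟩ ⟨k, k.lt_succ_self.trans h⟩
    else 1
  have hr : ∀ k, 0 < r k := fun k => by
    by_cases h : k + 1 < n
    · simpa [r, h] using div_pos_iff.2 (mul_pos_iff.1 (hpos _ _ rfl))
    · simp [r, h]
  refine ⟨fun i => ∏ k ∈ Finset.range i, r k,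
    fun i => Finset.prod_pos fun k _ => hr k, ?_⟩
  rintro ⟨i, hi⟩ ⟨j, hj⟩ (rfl : j = i + 1)
  have hsub : A ⟨i + 1, hj⟩ ⟨i, hi⟩ ≠ 0 := right_ne_zero_of_mul (hpos _ _ rfl).ne'
  simp only [Finset.prod_range_succ, r, dif_pos hj]
  field_simp

namespace RealDiagonalizable

variable {n : ℕ}

theorem of_isSymm {A : Matrix (Fin n) (Fin n) ℝ} (hA : A.IsSymm) : RealDiagonalizable A := by
  have hH : A.IsHermitian := isHermitian_iff_isSymm.2 hA
  set U : Matrix (Fin n) (Fin n) ℝ := ↑hH.eigenvectorUnitary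
  have hUU : U * star U = 1 := Matrix.mem_unitaryGroup_iff.1 hH.eigenvectorUnitary.2
  refine ⟨star U, diagonal (RCLike.ofReal ∘ hH.eigenvalues),
    isUnit_det_of_right_inverse (mul_eq_one_comm.1 hUU), isDiag_diagonal _, ?_⟩
  rw [inv_eq_left_inv hUU]
  exact hH.spectral_theorem

theorem conj {B : Matrix (Fin n) (Fin n) ℝ} (hB : RealDiagonalizable B)
    {P : Matrix (Fin n) (Fin n) ℝ} (hP : IsUnit P.det) : RealDiagonalizable (P⁻¹ * B * P) := by
  obtain ⟨Q, D, hQ, hD, rfl⟩ := hB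
  refine ⟨Q * P, D, by rw [det_mul]; exact hQ.mul hP, hD, ?_⟩
  simp only [Matrix.mul_inv_rev, mul_assoc]

theorem of_isSymm_diagonal_mul {A : Matrix (Fin n) (Fin n) ℝ} {d : Fin n → ℝ}
    (hd : ∀ i, 0 < d i) (hA : (diagonal d * A).IsSymm) : RealDiagonalizable A := by
  set e : Fin n → ℝ := fun i => √(d i)
  have he : ∀ i, e i ≠ 0 := fun i => (Real.sqrt_pos.2 (hd i)).ne'
  have hee : e * e = d := funext fun i => Real.mul_self_sqrt (hd i).le
  have hinv : diagonal e * diagonal e⁻¹ = 1 := by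
    rw [diagonal_mul_diagonal, ← diagonal_one]
    exact congrArg diagonal (funext fun i => mul_inv_cancel₀ (he i))
  have hinv' : diagonal e⁻¹ * diagonal e = 1 := mul_eq_one_comm.1 hinv
  have hsymm := isSymm_diagonal_mul_conj_inv he (hee ▸ hA)
  have hconj := (of_isSymm hsymm).conj (isUnit_det_of_right_inverse hinv)
  rwa [inv_eq_right_inv hinv, ← mul_assoc, ← mul_assoc, hinv', one_mul, mul_assoc, hinv',
    mul_one] at hconj

end RealDiagonalizable

/-- A real tridiagonal matrix whose corresponding off-diagonal entries have positive products
admits a positive diagonal symmetrizer and is real diagonalizable. -/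
theorem tridiagonal_posProd_diagonalizable {n : ℕ} (A : Matrix (Fin n) (Fin n) ℝ)
    (htri : ∀ i j : Fin n, ((i : ℕ) + 1 < (j : ℕ) ∨ (j : ℕ) + 1 < (i : ℕ)) → A i j = 0)
    (hpos : ∀ i j : Fin n, (j : ℕ) = (i : ℕ) + 1 → 0 < A i j * A j i) :
    (∃ d : Fin n → ℝ, (∀ i, 0 < d i) ∧ ((Matrix.diagonal d) * A).IsSymm) ∧
      RealDiagonalizable A := by
  obtain ⟨d, hd, hadj⟩ := exists_pos_adjacent_symmetrizer A hpos
  have hsymm := isSymm_diagonal_mul_of_tridiagonal htri hadj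
  exact ⟨⟨d, hd, hsymm⟩, .of_isSymm_diagonal_mul hd hsymm⟩
end

section
/- The coefficient matrix A of the P_N closure (as defined by the Legendre recurrence) is real diagonalizable, and all its eigenvalues are real and lie in the interval [−1, 1]. -/
/-! With the weights `w i = 2 i + 1` the closure matrix satisfies `w i A i j = w j A j i`, so
conjugating by `diag (√w)` makes it symmetric. The spectral theorem then diagonalizes it over
`ℝ` by a real similarity, which both proves real diagonalizability and shows that the complex
spectrum consists of the real diagonal entries. The entries are nonnegative with row sums
`(i + 1)/(2i + 1) + i/(2i + 1) = 1` (or less in the last row), so Gershgorin's theorem bounds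
every eigenvalue by `1`. -/

open Matrix

noncomputable def pnMatrix (N : ℕ) : Matrix (Fin (N + 1)) (Fin (N + 1)) ℝ := fun i j =>
  if (j : ℕ) = (i : ℕ) + 1 then (((i : ℕ) : ℝ) + 1) / (2 * ((i : ℕ) : ℝ) + 1)
  else if (i : ℕ) = (j : ℕ) + 1 then ((i : ℕ) : ℝ) / (2 * ((i : ℕ) : ℝ) + 1)
  else 0

namespace Matrix

variable {ι : Type*} [Fintype ι] [DecidableEq ι]

theorem spectrum_eq_of_mul_eq_mul {K : Type*} [Field K] {A B P : Matrix ι ι K} (hP : IsUnit P)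
    (h : P * A = B * P) : spectrum K A = spectrum K B := by
  obtain ⟨u, rfl⟩ := hP
  rw [← spectrum.units_conjugate' (u := u) (a := B), mul_assoc, ← h, ← mul_assoc, Units.inv_mul,
    one_mul]

theorem spectrum_map_eq_range_of_mul_eq_diagonal_mul {K L : Type*} [Field K] [Field L]
    (f : K →+* L) {A P : Matrix ι ι K} {d : ι → K} (hP : IsUnit P)
    (h : P * A = diagonal d * P) : spectrum L (A.map f) = Set.range (fun i ↦ f (d i)) := by
  have hmap : P.map f * A.map f = diagonal (fun i ↦ f (d i)) * P.map f := by
    simpa [diagonal_map] using congrArg f.mapMatrix h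
  rw [spectrum_eq_of_mul_eq_mul (hP.map f.mapMatrix) hmap, spectrum_diagonal]

theorem norm_le_of_mem_spectrum_of_sum_norm_le {K : Type*} [NormedField K] {A : Matrix ι ι K}
    {r : ℝ} (h : ∀ i, ∑ j, ‖A i j‖ ≤ r) {μ : K} (hμ : μ ∈ spectrum K A) : ‖μ‖ ≤ r := by
  rw [← spectrum_toLin', ← Module.End.hasEigenvalue_iff_mem_spectrum] at hμ
  obtain ⟨k, hk⟩ := eigenvalue_mem_ball hμ
  calc ‖μ‖ ≤ ‖A k k‖ + ‖μ - A k k‖ := norm_le_insert' _ _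
    _ ≤ ‖A k k‖ + ∑ j ∈ Finset.univ.erase k, ‖A k j‖ := by
        gcongr
        rwa [← dist_eq_norm, ← Metric.mem_closedBall]
    _ = ∑ j, ‖A k j‖ := Finset.add_sum_erase _ (fun j ↦ ‖A k j‖) (Finset.mem_univ k)
    _ ≤ r := h k

theorem IsHermitian.exists_mul_eq_diagonal_mul {𝕜 : Type*} [RCLike 𝕜] {A : Matrix ι ι 𝕜}
    (hA : A.IsHermitian) :
    ∃ (V : Matrix ι ι 𝕜) (d : ι → ℝ), IsUnit V ∧ V * A = diagonal (fun i ↦ (d i : 𝕜)) * V := by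
  have hspec := hA.spectral_theorem
  generalize hA.eigenvectorUnitary = U, hA.eigenvalues = d at hspec
  refine ⟨star (U : Matrix ι ι 𝕜), d, Unitary.isUnit_coe (U := star U), ?_⟩
  rw [hspec, Unitary.conjStarAlgAut_apply]
  simp [← mul_assoc, Function.comp_def]

theorem isHermitian_diagonal_mul_mul_diagonal_inv {A : Matrix ι ι ℝ} {s : ι → ℝ}
    (hs : ∀ i, s i ≠ 0) (h : ∀ i j, s i ^ 2 * A i j = s j ^ 2 * A j i) :
    (diagonal s * A * diagonal s⁻¹).IsHermitian := by
  ext i j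
  have := hs i
  have := hs j
  simp only [conjTranspose_apply, star_trivial, diagonal_mul, mul_diagonal, Pi.inv_apply]
  field_simp
  linear_combination (h i j).symm

theorem exists_mul_eq_diagonal_mul_of_symmetrizable {A : Matrix ι ι ℝ} {w : ι → ℝ}
    (hw : ∀ i, 0 < w i) (h : ∀ i j, w i * A i j = w j * A j i) :
    ∃ (P : Matrix ι ι ℝ) (d : ι → ℝ), IsUnit P ∧ P * A = diagonal d * P := by
  set s : ι → ℝ := fun i ↦ √(w i)
  have hs : ∀ i, s i ≠ 0 := fun i ↦ (Real.sqrt_pos.mpr (hw i)).ne'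
  have hS : diagonal s⁻¹ * diagonal s = 1 := by
    rw [diagonal_mul_diagonal, ← diagonal_one]
    exact congrArg diagonal (funext fun i ↦ inv_mul_cancel₀ (hs i))
  have hB : (diagonal s * A * diagonal s⁻¹).IsHermitian :=
    isHermitian_diagonal_mul_mul_diagonal_inv hs fun i j ↦ by
      simp only [s, Real.sq_sqrt (hw _).le, h]
  obtain ⟨V, d, hV, hVB⟩ := hB.exists_mul_eq_diagonal_mul
  refine ⟨V * diagonal s, d, hV.mul (isUnit_diagonal.mpr (Pi.isUnit_iff.mpr fun i ↦ (hs i).isUnit)),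
    ?_⟩
  calc V * diagonal s * A = V * (diagonal s * A * diagonal s⁻¹) * diagonal s := by
        simp only [mul_assoc, hS, mul_one]
    _ = diagonal d * (V * diagonal s) := by rw [hVB, mul_assoc]; rfl

end Matrix

theorem Finset.sum_ite_eq_le_of_injective {ι β : Type*} [Fintype ι] [DecidableEq β] {g : ι → β}
    (hg : Function.Injective g) (b : β) {c : ℝ} (hc : 0 ≤ c) :
    ∑ i, (if g i = b then c else 0) ≤ c := by
  by_cases hb : ∃ i, g i = b
  · obtain ⟨i₀, rfl⟩ := hb
    classical
    simp_rw [hg.eq_iff]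
    simp
  · simp [not_exists.mp hb, hc]

theorem pnMatrix_nonneg (N : ℕ) (i j : Fin (N + 1)) : 0 ≤ pnMatrix N i j := by
  unfold pnMatrix
  split_ifs <;> positivity

theorem pnMatrix_weighted_symm (N : ℕ) (i j : Fin (N + 1)) :
    (2 * ((i : ℕ) : ℝ) + 1) * pnMatrix N i j = (2 * ((j : ℕ) : ℝ) + 1) * pnMatrix N j i := by
  have hi : 2 * ((i : ℕ) : ℝ) + 1 ≠ 0 := by positivity
  have hj : 2 * ((j : ℕ) : ℝ) + 1 ≠ 0 := by positivity
  unfold pnMatrix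
  split_ifs with h₁ h₂ h₃
  · omega
  · rw [mul_div_cancel₀ _ hi, mul_div_cancel₀ _ hj]
    exact_mod_cast h₁.symm
  · rw [mul_div_cancel₀ _ hi, mul_div_cancel₀ _ hj]
    exact_mod_cast h₃
  · simp

theorem sum_pnMatrix_row_le_one (N : ℕ) (i : Fin (N + 1)) : ∑ j, pnMatrix N i j ≤ 1 := by
  set n : ℝ := ((i : ℕ) : ℝ)
  have hn : 0 ≤ n := Nat.cast_nonneg _
  have hrow : ∀ j : Fin (N + 1), pnMatrix N i j =
      (if (j : ℕ) = i + 1 then (n + 1) / (2 * n + 1) else 0) +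
        (if (j : ℕ) + 1 = i then n / (2 * n + 1) else 0) := by
    intro j
    unfold pnMatrix
    split_ifs <;> first | omega | simp [n]
  calc ∑ j, pnMatrix N i j ≤ (n + 1) / (2 * n + 1) + n / (2 * n + 1) := by
        simp only [hrow, Finset.sum_add_distrib]
        gcongr
        · exact Finset.sum_ite_eq_le_of_injective Fin.val_injective _ (by positivity)
        · exact Finset.sum_ite_eq_le_of_injective
            ((add_left_injective 1).comp Fin.val_injective) _ (by positivity)
    _ = 1 := by
        field_simp
        ring

/-- The `P_N` closure matrix is real diagonalizable and all its (complex) eigenvalues are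
real and lie in `[-1, 1]`. -/
theorem pn_diagonalizable_and_spectrum (N : ℕ) :
    RealDiagonalizable (pnMatrix N) ∧
      ∀ μ ∈ spectrum ℂ ((pnMatrix N).map (Complex.ofReal)),
        μ.im = 0 ∧ ‖μ‖ ≤ 1 := by
  obtain ⟨P, d, hP, hPA⟩ := exists_mul_eq_diagonal_mul_of_symmetrizable
    (fun i : Fin (N + 1) ↦ by positivity) (pnMatrix_weighted_symm N)
  have hdet : IsUnit P.det := (isUnit_iff_isUnit_det P).mp hP
  refine ⟨⟨P, diagonal d, hdet, isDiag_diagonal d, ?_⟩, fun μ hμ ↦ ⟨?_, ?_⟩⟩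
  · rw [mul_assoc, ← hPA, ← mul_assoc, nonsing_inv_mul _ hdet, one_mul]
  · rw [show (Complex.ofReal : ℝ → ℂ) = Complex.ofRealHom from rfl,
      spectrum_map_eq_range_of_mul_eq_diagonal_mul _ hP hPA] at hμ
    obtain ⟨i, rfl⟩ := hμ
    exact Complex.ofReal_im (d i)
  · refine norm_le_of_mem_spectrum_of_sum_norm_le (fun i ↦ ?_) hμ
    simpa [Complex.norm_real, abs_of_nonneg (pnMatrix_nonneg N i _)] using
      sum_pnMatrix_row_le_one N i
end

section
/- Let A₀ = diag(D, B) be symmetric positive definite with D ∈ ℝ^{(N−2)×(N−2)} diagonal positive and B ∈ ℝ^{3×3} symmetric positive definite, and let Q_U = diag(0, −σ_s·I_N) (first diagonal entry 0, remaining N entries −σ_s) with σ_s ≥ 0. Then A₀Q_U is symmetric negative semi-definite. -/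
/-!
`Q_U = -σ_s P` with `P = diag(0, 1, …, 1)` the orthogonal projection killing the first
coordinate. The first row of `A₀` vanishes off the diagonal (it lies in the `D` block), and so,
by symmetry, does its first column; hence `A₀` commutes with `P`, and
`-A₀ Q_U = σ_s A₀ P = σ_s Pᵀ A₀ P` is a nonnegative multiple of a congruence of `A₀`.
-/

open Matrix

namespace Matrix

variable {n R : Type*} [Fintype n]

lemma PosSemidef.mul_of_commute_of_isStarProjection [Ring R] [PartialOrder R] [StarRing R]
    {A P : Matrix n n R} (hA : A.PosSemidef) (hP : IsStarProjection P) (hAP : Commute A P) :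
    (A * P).PosSemidef := by
  have hcongr : A * P = Pᴴ * A * P := by
    calc A * P = A * P * P := by rw [mul_assoc, hP.isIdempotentElem.eq]
      _ = Pᴴ * A * P := by rw [hAP.eq, ← star_eq_conjTranspose, hP.isSelfAdjoint.star_eq]
  rw [hcongr]
  exact hA.conjTranspose_mul_mul_same P

lemma commute_diagonal_of_apply_eq_zero [CommSemiring R] [DecidableEq n]
    {A : Matrix n n R} {d : n → R} (h : ∀ i j, d i ≠ d j → A i j = 0) :
    Commute A (diagonal d) := by
  ext i j
  rw [mul_diagonal, diagonal_mul]
  by_cases hij : d i = d j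
  · rw [hij, mul_comm]
  · simp [h i j hij]

end Matrix

/-- For the block-diagonal symmetrizer `A₀ = diag(D, B)` (`D` diagonal on the first `N-2`
indices) and the relaxation Jacobian `Q_U = diag(0, -σ_s I_N)` with `σ_s ≥ 0`, the product
`A₀ Q_U` is symmetric negative semi-definite. -/
theorem symmetrizer_source_dissipative (N : ℕ) (hN : 3 ≤ N) (σs : ℝ) (hσs : 0 ≤ σs)
    (A₀ : Matrix (Fin (N + 1)) (Fin (N + 1)) ℝ)
    (hA₀ : A₀.PosDef)
    (hdiag : ∀ i j : Fin (N + 1), (i : ℕ) < N - 2 → i ≠ j → A₀ i j = 0) :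
    let Q : Matrix (Fin (N + 1)) (Fin (N + 1)) ℝ :=
      Matrix.diagonal fun i => if (i : ℕ) = 0 then 0 else -σs
    (A₀ * Q).IsSymm ∧ (-(A₀ * Q)).PosSemidef := by
  intro Q
  set p : Fin (N + 1) → ℝ := fun i => if i = 0 then 0 else 1
  have hQ : -(A₀ * Q) = σs • (A₀ * diagonal p) := by
    ext i j
    by_cases hj : j = 0 <;> simp [Q, p, hj, mul_comm]
  have hP : IsStarProjection (diagonal p) := by
    refine ⟨?_, isHermitian_diagonal p⟩
    rw [IsIdempotentElem, diagonal_mul_diagonal]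
    congr 1 with i
    by_cases hi : i = 0 <;> simp [p, hi]
  have hcomm : Commute A₀ (diagonal p) := by
    refine commute_diagonal_of_apply_eq_zero fun i j hij => ?_
    by_cases hi : i = 0
    · exact hdiag i j (by simp [hi]; omega) fun h => hij (by rw [h])
    · have hj : j = 0 := by by_contra hj; simp [p, hi, hj] at hij
      rw [← hA₀.isHermitian.apply i j, star_trivial]
      exact hdiag j i (by simp [hj]; omega) fun h => hij (by rw [h])
  have hpsd : (-(A₀ * Q)).PosSemidef :=
    hQ ▸ (hA₀.posSemidef.mul_of_commute_of_isStarProjection hP hcomm).smul hσs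
  exact ⟨isHermitian_iff_isSymm.mp (by simpa using hpsd.isHermitian.neg), hpsd⟩
end
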